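/- arXiv:2108.00531 — 2 statements merged into one kernel-verified Lean document; each statement's English description precedes it below -/
import Mathlib

section
/- A monomial ideal I generated in a single degree is polymatroidal if and only if I satisfies the non-pure dual exchange property. -/
/-- A monomial in `K[x_1,...,x_n]` is identified with its exponent vector. -/
abbrev Mon (n : ℕ) := Fin n → ℕ

/-- Total degree of a monomial. -/
def degree {n : ℕ} (u : Mon n) : ℕ := ∑ i, u i

/-- A monomial ideal is identified with the set of exponent vectors of the monomials it
contains; this set is closed under multiplication by monomials. -/
def IsMonomialIdeal {n : ℕ} (I : Set (Mon n)) : Prop :=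
  ∀ u ∈ I, ∀ w : Mon n, u + w ∈ I

/-- The minimal monomial generating set `G(I)` of a monomial ideal: monomials of `I`
minimal with respect to divisibility (pointwise `≤` of exponent vectors). -/
def minGens {n : ℕ} (I : Set (Mon n)) : Set (Mon n) :=
  {u | u ∈ I ∧ ∀ v ∈ I, v ≤ u → v = u}

/-- `exch v i j` is the exponent vector of `x_j * (v / x_i)` (for `i ≠ j`). -/
def exch {n : ℕ} (v : Mon n) (i j : Fin n) : Mon n :=
  fun k => if k = i then v k - 1 else if k = j then v k + 1 else v k

/-- `component I d` is the ideal `I_⟨d⟩` generated by the degree-`d` monomials of `I`. -/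
def component {n : ℕ} (I : Set (Mon n)) (d : ℕ) : Set (Mon n) :=
  {w | ∃ u ∈ I, degree u = d ∧ u ≤ w}

/-- `I` is generated in a single degree. -/
def GeneratedInSingleDegree {n : ℕ} (I : Set (Mon n)) : Prop :=
  ∃ d, ∀ u ∈ minGens I, degree u = d

/-- A polymatroidal ideal: generated in a single degree and its generators satisfy the
exchange property. -/
def IsPolymatroidal {n : ℕ} (I : Set (Mon n)) : Prop :=
  GeneratedInSingleDegree I ∧
  ∀ u ∈ minGens I, ∀ v ∈ minGens I, ∀ i : Fin n, v i < u i →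
    ∃ j : Fin n, u j < v j ∧ exch u i j ∈ I

/-- Componentwise polymatroidal: each graded component ideal `I_⟨d⟩` is polymatroidal. -/
def ComponentwisePolymatroidal {n : ℕ} (I : Set (Mon n)) : Prop :=
  ∀ d : ℕ, IsPolymatroidal (component I d)

/-- Non-pure dual exchange property: for `u, v ∈ G(I)` with `deg u ≤ deg v` and
`deg_{x_i} v < deg_{x_i} u` there is `j` with `deg_{x_j} v > deg_{x_j} u` and
`x_i * (v / x_j) ∈ I`. -/
def NonPureDualExchange {n : ℕ} (I : Set (Mon n)) : Prop :=
  ∀ u ∈ minGens I, ∀ v ∈ minGens I, degree u ≤ degree v →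
    ∀ i : Fin n, v i < u i → ∃ j : Fin n, u j < v j ∧ exch v j i ∈ I

/-- Non-pure exchange property: for `u, v ∈ G(I)` with `deg u ≤ deg v` and
`deg_{x_i} v > deg_{x_i} u` there is `j` with `deg_{x_j} v < deg_{x_j} u` and
`x_j * (v / x_i) ∈ I`. -/
def NonPureExchange {n : ℕ} (I : Set (Mon n)) : Prop :=
  ∀ u ∈ minGens I, ∀ v ∈ minGens I, degree u ≤ degree v →
    ∀ i : Fin n, u i < v i → ∃ j : Fin n, v j < u j ∧ exch v i j ∈ I

/-- The monomial ideal generated by a set `G` of monomials. -/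
def genBy {n : ℕ} (G : Set (Mon n)) : Set (Mon n) := {w | ∃ u ∈ G, u ≤ w}

/-- The product of two monomial ideals (as sets of monomials). -/
def mulIdeal {n : ℕ} (I J : Set (Mon n)) : Set (Mon n) :=
  {w | ∃ u ∈ I, ∃ v ∈ J, w = u + v}

/-- The product of a monomial ideal with the monomial `u`. -/
def mulMon {n : ℕ} (u : Mon n) (I : Set (Mon n)) : Set (Mon n) :=
  (fun v => u + v) '' I

/-- Strong exchange property: for all generators `u, v` and all `i, j` with
`deg_{x_i} u > deg_{x_i} v` and `deg_{x_j} u < deg_{x_j} v`, `x_j * (u / x_i) ∈ I`. -/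
def StrongExchange {n : ℕ} (I : Set (Mon n)) : Prop :=
  ∀ u ∈ minGens I, ∀ v ∈ minGens I, ∀ i j : Fin n,
    v i < u i → u j < v j → exch u i j ∈ I

/-- The Veronese type ideal `I_{(d; a_1,...,a_n)}`: generated by all monomials of
degree `d` with `deg_{x_i} ≤ a i` for all `i`. -/
def veronese (n d : ℕ) (a : Fin n → ℕ) : Set (Mon n) :=
  {w | ∃ u : Mon n, degree u = d ∧ (∀ i, u i ≤ a i) ∧ u ≤ w}

/-- A list of monomials is an admissible order if each colon ideal
`(u_1,...,u_{i-1}) : u_i` is generated by a subset `S` of the variables. -/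
def AdmissibleOrder {n : ℕ} (L : List (Mon n)) : Prop :=
  ∀ i : Fin L.length, ∃ S : Set (Fin n),
    ∀ w : Mon n, (w + L.get i ∈ genBy {u | u ∈ L.take i.1}) ↔ ∃ k ∈ S, 1 ≤ w k

/-- `I` has linear quotients: some ordering of `G(I)` is admissible. -/
def HasLinearQuotients {n : ℕ} (I : Set (Mon n)) : Prop :=
  ∃ L : List (Mon n), L.Nodup ∧ (∀ u, u ∈ L ↔ u ∈ minGens I) ∧ AdmissibleOrder L

/-- `I` can be extended by linear quotients to `J`: `G(I) ⊆ G(J)` and the elements of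
`G(J) \ G(I)` can be ordered `v_1,...,v_m` such that each colon ideal
`(G(I), v_1,...,v_i) : v_{i+1}` is generated by a subset of the variables. -/
def ExtendsByLinearQuotients {n : ℕ} (I J : Set (Mon n)) : Prop :=
  I ⊆ J ∧ minGens I ⊆ minGens J ∧
  ∃ L : List (Mon n), L.Nodup ∧ (∀ u, u ∈ L ↔ u ∈ minGens J ∧ u ∉ minGens I) ∧
    ∀ i : Fin L.length, ∃ S : Set (Fin n),
      ∀ w : Mon n,
        (w + L.get i ∈ genBy (minGens I ∪ {u | u ∈ L.take i.1})) ↔ ∃ k ∈ S, 1 ≤ w k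

/-- The minimal generators of `I ⊆ K[x,y]` are `u_i = x^{a i} y^{b i}`, `i = 0,...,m`,
with `a` strictly decreasing, `b` strictly increasing, `a m = 0` and `b 0 = 0`
(so `I` is `(x,y)`-primary). -/
def yxTightGens (m : ℕ) (a b : ℕ → ℕ) (I : Set (Mon 2)) : Prop :=
  (∀ i k : ℕ, i ≤ m → k ≤ m → i < k → a k < a i ∧ b i < b k) ∧
  a m = 0 ∧ b 0 = 0 ∧
  minGens I = {u | ∃ i ≤ m, u = ![a i, b i]}

/-- `I` is `x`-tight in `[0, r]`: the `x`-exponents of the generators are exactly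
`r, r-1, ..., 1, 0` (i.e. `a (r - i) = i`). -/
def xTight (I : Set (Mon 2)) (r : ℕ) : Prop :=
  ∃ b : ℕ → ℕ, yxTightGens r (fun i => r - i) b I

/-- `I` is `y`-tight in `[0, s]`: the `y`-exponents of the generators are exactly
`0, 1, ..., s`. -/
def yTight (I : Set (Mon 2)) (s : ℕ) : Prop :=
  ∃ a : ℕ → ℕ, yxTightGens s a (fun i => i) I

/-- `I` is `yx`-tight: there is `0 ≤ j ≤ m` with `b i = i` for `i = 0,...,j` and
`a (m - i) = i` for `i = 0,...,m-j`. -/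
def yxTight (I : Set (Mon 2)) : Prop :=
  ∃ (m : ℕ) (a b : ℕ → ℕ), yxTightGens m a b I ∧
    ∃ j ≤ m, (∀ i ≤ j, b i = i) ∧ ∀ i ≤ m - j, a (m - i) = i

/-- Powers of a monomial ideal. -/
def powIdeal {n : ℕ} (I : Set (Mon n)) : ℕ → Set (Mon n)
  | 0 => Set.univ
  | k + 1 => mulIdeal (powIdeal I k) I

/-! Both properties only concern `G(I)`, an antichain of exponent vectors of a single degree
(so the condition `deg u ≤ deg v` is void). Viewed in `ℤⁿ`, the dual exchange property of `G` is
the exchange property of `-G`, so it suffices to show that the exchange property of an antichain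
implies the dual one. For that, walk from `u` towards `v` by exchange steps: each lowers the
excess `∑ (u - v)⁺` and creates no new coordinate where `u` falls short of `v`. Once `u` exceeds
`v` only in `x_i`, and by one, the next step lands on `v` (antichain), and read backwards it is
the required dual exchange `x_i (v / x_j) = u`. -/

open Pointwise

section ExchangeOnIntegerVectors

variable {ι : Type*} [DecidableEq ι]

def moveUnit (u : ι → ℤ) (i j : ι) : ι → ℤ := u - Pi.single i 1 + Pi.single j 1

@[simp]
lemma moveUnit_apply (u : ι → ℤ) (i j m : ι) :
    moveUnit u i j m = u m - (if m = i then 1 else 0) + (if m = j then 1 else 0) := by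
  simp [moveUnit, Pi.single_apply]

@[simp]
lemma moveUnit_moveUnit (u : ι → ℤ) (i j : ι) : moveUnit (moveUnit u i j) j i = u := by
  simp [moveUnit]

lemma neg_moveUnit (u : ι → ℤ) (i j : ι) : -moveUnit u i j = moveUnit (-u) j i := by
  simp only [moveUnit]
  abel

lemma lt_of_moveUnit_lt {u v : ι → ℤ} {k j m : ι} (hk : v k < u k)
    (h : moveUnit u k j m < v m) : u m < v m := by
  simp only [moveUnit_apply] at h
  split_ifs at h <;> subst_vars <;> omega

def ExchangeProperty (S : Set (ι → ℤ)) : Prop :=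
  ∀ u ∈ S, ∀ v ∈ S, ∀ i, v i < u i → ∃ j, u j < v j ∧ moveUnit u i j ∈ S

def DualExchangeProperty (S : Set (ι → ℤ)) : Prop :=
  ∀ u ∈ S, ∀ v ∈ S, ∀ i, v i < u i → ∃ j, u j < v j ∧ moveUnit v j i ∈ S

theorem dualExchangeProperty_neg_iff {S : Set (ι → ℤ)} :
    DualExchangeProperty (-S) ↔ ExchangeProperty S := by
  constructor
  · intro h u hu v hv i hi
    obtain ⟨j, hj, hmem⟩ := h (-v) (by simpa) (-u) (by simpa) i (by simpa)
    refine ⟨j, by simpa using hj, ?_⟩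
    simpa [Set.mem_neg, neg_moveUnit] using hmem
  · intro h u hu v hv i hi
    obtain ⟨j, hj, hmem⟩ := h (-v) hv (-u) hu i (by simpa)
    refine ⟨j, by simpa using hj, ?_⟩
    simpa [Set.mem_neg, neg_moveUnit] using hmem

variable [Fintype ι]

lemma sum_moveUnit (u : ι → ℤ) (i j : ι) : ∑ m, moveUnit u i j m = ∑ m, u m := by
  simp [moveUnit, Finset.sum_add_distrib, Finset.sum_sub_distrib]

def excess (u v : ι → ℤ) : ℕ := ∑ k, (u k - v k).toNat

lemma excess_moveUnit_lt {u v : ι → ℤ} {k j : ι} (hk : v k < u k) (hj : u j < v j) :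
    excess (moveUnit u k j) v < excess u v := by
  refine Finset.sum_lt_sum (fun m _ => ?_) ⟨k, Finset.mem_univ k, ?_⟩ <;>
  · simp only [moveUnit_apply]
    split_ifs <;> subst_vars <;> omega

theorem ExchangeProperty.dualExchangeProperty {S : Set (ι → ℤ)} (hS : ExchangeProperty S)
    (hA : IsAntichain (· ≤ ·) S) : DualExchangeProperty S := by
  intro u hu v hv i hi
  induction hN : excess u v using Nat.strong_induction_on generalizing u with
  | _ N ih =>
  subst hN
  have descend : ∀ k j, v k < u k → u j < v j → moveUnit u k j ∈ S → v i < moveUnit u k j i →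
      ∃ j, u j < v j ∧ moveUnit v j i ∈ S := by
    intro k j hk hj hw hwi
    obtain ⟨j', hj', hmem⟩ := ih _ (excess_moveUnit_lt hk hj) _ hw hwi rfl
    exact ⟨j', lt_of_moveUnit_lt hk hj', hmem⟩
  by_cases hex : ∃ k ≠ i, v k < u k
  · obtain ⟨k, hki, hk⟩ := hex
    obtain ⟨j, hj, hw⟩ := hS u hu v hv k hk
    refine descend k j hk hj hw ?_
    simp only [moveUnit_apply, if_neg hki.symm]
    split_ifs <;> omega
  · push Not at hex
    obtain ⟨j, hj, hw⟩ := hS u hu v hv i hi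
    by_cases hwi : v i < moveUnit u i j i
    · exact descend i j hi hj hw hwi
    have hle : moveUnit u i j ≤ v := fun m => by
      rcases eq_or_ne m i with rfl | hmi
      · simp only [moveUnit_apply] at hwi ⊢
        split_ifs at hwi ⊢ <;> omega
      · have := hex m hmi
        simp only [moveUnit_apply, if_neg hmi]
        split_ifs <;> subst_vars <;> omega
    refine ⟨j, hj, ?_⟩
    rwa [← hA.eq hw hv hle, moveUnit_moveUnit]

theorem exchangeProperty_iff_dualExchangeProperty {S : Set (ι → ℤ)}
    (hA : IsAntichain (· ≤ ·) S) : ExchangeProperty S ↔ DualExchangeProperty S := by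
  have hA' : IsAntichain (· ≤ ·) (-S) := by
    rw [← Set.image_neg_eq_neg]
    exact hA.swap.image _ fun a b h => by simpa using h
  refine ⟨fun h => h.dualExchangeProperty hA, fun h => ?_⟩
  rw [← dualExchangeProperty_neg_iff]
  rw [← neg_neg S, dualExchangeProperty_neg_iff] at h
  exact h.dualExchangeProperty hA'

end ExchangeOnIntegerVectors

section MonomialIdeals

variable {n : ℕ}

def Mon.toInt (u : Mon n) : Fin n → ℤ := fun k => u k

@[simp]
lemma Mon.toInt_apply (u : Mon n) (k : Fin n) : Mon.toInt u k = u k := rfl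

lemma Mon.toInt_injective : Function.Injective (Mon.toInt (n := n)) :=
  fun _ _ h => funext fun k => by simpa using congrFun h k

lemma Mon.toInt_exch {u : Mon n} {i j : Fin n} (hij : i ≠ j) (hi : 1 ≤ u i) :
    Mon.toInt (exch u i j) = moveUnit (Mon.toInt u) i j := by
  funext m
  simp only [Mon.toInt_apply, exch, moveUnit_apply]
  split_ifs <;> subst_vars <;> omega

lemma degree_exch {u : Mon n} {i j : Fin n} (hij : i ≠ j) (hi : 1 ≤ u i) :
    degree (exch u i j) = degree u := by
  have h := sum_moveUnit (Mon.toInt u) i j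
  rw [← Mon.toInt_exch hij hi] at h
  simp only [Mon.toInt_apply] at h
  exact_mod_cast h

lemma eq_of_le_of_degree_eq {u v : Mon n} (h : u ≤ v) (hd : degree u = degree v) : u = v :=
  funext fun k => (Finset.sum_eq_sum_iff_of_le fun m _ => h m).mp hd k (Finset.mem_univ k)

lemma isAntichain_minGens (I : Set (Mon n)) : IsAntichain (· ≤ ·) (minGens I) :=
  fun u hu _ hv hne huv => hne (hv.2 u hu.1 huv)

lemma mem_minGens_of_degree_eq {I : Set (Mon n)} {d : ℕ} (hd : ∀ u ∈ minGens I, degree u = d)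
    {w : Mon n} (hw : w ∈ I) (hdw : degree w = d) : w ∈ minGens I := by
  obtain ⟨g, hgw, hg⟩ := exists_minimal_le_of_wellFoundedLT (· ∈ I) w hw
  have hgI : g ∈ minGens I := ⟨hg.prop, fun _ hv hvg => hg.eq_of_le hv hvg⟩
  rwa [← eq_of_le_of_degree_eq hgw ((hd g hgI).trans hdw.symm)]

lemma exch_mem_iff {I : Set (Mon n)} {d : ℕ} (hd : ∀ u ∈ minGens I, degree u = d)
    {u : Mon n} (hu : u ∈ minGens I) {i j : Fin n} (hij : i ≠ j) (hi : 1 ≤ u i) :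
    exch u i j ∈ I ↔ moveUnit (Mon.toInt u) i j ∈ Mon.toInt '' minGens I := by
  rw [← Mon.toInt_exch hij hi, Mon.toInt_injective.mem_set_image]
  exact ⟨fun h => mem_minGens_of_degree_eq hd h ((degree_exch hij hi).trans (hd u hu)),
    fun h => h.1⟩

lemma isPolymatroidal_iff_exchangeProperty {I : Set (Mon n)} {d : ℕ}
    (hd : ∀ u ∈ minGens I, degree u = d) :
    IsPolymatroidal I ↔ ExchangeProperty (Mon.toInt '' minGens I) := by
  simp only [IsPolymatroidal, ExchangeProperty, Set.forall_mem_image, Mon.toInt_apply,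
    Nat.cast_lt]
  rw [and_iff_right ⟨d, hd⟩]
  exact forall₂_congr fun u hu => forall₂_congr fun v _ => forall₂_congr fun i hi =>
    exists_congr fun j => and_congr_right fun hj =>
      exch_mem_iff hd hu (by rintro rfl; omega) (by omega)

lemma nonPureDualExchange_iff_dualExchangeProperty {I : Set (Mon n)} {d : ℕ}
    (hd : ∀ u ∈ minGens I, degree u = d) :
    NonPureDualExchange I ↔ DualExchangeProperty (Mon.toInt '' minGens I) := by
  simp only [NonPureDualExchange, DualExchangeProperty, Set.forall_mem_image, Mon.toInt_apply,
    Nat.cast_lt]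
  refine forall₂_congr fun u hu => forall₂_congr fun v hv => ?_
  rw [forall_prop_of_true ((hd u hu).trans (hd v hv).symm).le]
  exact forall₂_congr fun i hi => exists_congr fun j => and_congr_right fun hj =>
    exch_mem_iff hd hv (by rintro rfl; omega) (by omega)

end MonomialIdeals

theorem stmt_1_general {n : ℕ} (I : Set (Mon n))
    (hsd : GeneratedInSingleDegree I) :
    IsPolymatroidal I ↔ NonPureDualExchange I := by
  obtain ⟨d, hd⟩ := hsd
  rw [isPolymatroidal_iff_exchangeProperty hd, nonPureDualExchange_iff_dualExchangeProperty hd]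
  exact exchangeProperty_iff_dualExchangeProperty <|
    (isAntichain_minGens I).image _ fun _ _ h k => by simpa using h k

/-- an ideal generated in a single degree is polymatroidal iff it has the
non-pure dual exchange property. -/
theorem stmt_1 {n : ℕ} (I : Set (Mon n)) (hI : IsMonomialIdeal I)
    (hsd : GeneratedInSingleDegree I) :
    IsPolymatroidal I ↔ NonPureDualExchange I :=
  stmt_1_general I hsd
end

section
/- Let I ⊂ K[x,y] be a componentwise polymatroidal ideal with minimal generators u_i = x^{a_i}y^{b_i}, i = 0,...,m, where a_0 > ... > a_m and b_0 < ... < b_m. If deg(u_i) > deg(u_{i+1}) then a_i - 1 > a_{i+1} and b_{i+1} = b_i + 1; if deg(u_i) < deg(u_{i+1}) then b_i + 1 < b_{i+1} and a_{i+1} = a_i - 1; if deg(u_i) = deg(u_{i+1}) then b_{i+1} = b_i + 1 and a_{i+1} = a_i - 1. -/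
/-
In `K[x,y]` the exchange of a polymatroidal ideal is forced: moving an exponent away from one
variable puts it on the other. Given consecutive generators `u_i, u_{i+1}` with, say,
`deg u_{i+1} ≤ deg u_i = d`, raise the `y`-exponent of `u_{i+1}` to reach degree `d`; exchanging
`x` for `y` in `u_i` inside `I_⟨d⟩` shows `x^{a_i - 1} y^{b_i + 1} ∈ I`. Some generator divides
it, and since its `x`-exponent is below `a_i` it comes after `u_i` in the staircase, so
`b_{i+1} ≤ b_i + 1`. Symmetrically `deg u_i ≤ deg u_{i+1}` gives `a_i ≤ a_{i+1} + 1`, and the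
three cases of the theorem follow by comparing degrees.
-/

lemma degree_add {n : ℕ} (u v : Mon n) : degree (u + v) = degree u + degree v :=
  Finset.sum_add_distrib

lemma degree_single {n : ℕ} (j : Fin n) (c : ℕ) : degree (Pi.single j c : Mon n) = c := by
  simp [degree]

lemma degree_vec_two (p q : ℕ) : degree ![p, q] = p + q := by
  simp [degree]

lemma degree_lt_degree {n : ℕ} {u v : Mon n} (h : u < v) : degree u < degree v := by
  obtain ⟨hle, k, hk⟩ := Pi.lt_def.1 h
  exact Finset.sum_lt_sum (fun i _ => hle i) ⟨k, Finset.mem_univ k, hk⟩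

lemma exists_mem_minGens_le {n : ℕ} {I : Set (Mon n)} {w : Mon n} (hw : w ∈ I) :
    ∃ v ∈ minGens I, v ≤ w := by
  obtain ⟨v, hvw, hmin⟩ := exists_minimal_le_of_wellFoundedLT (· ∈ I) w hw
  exact ⟨v, ⟨hmin.prop, fun y hy hyv => hmin.eq_of_le hy hyv⟩, hvw⟩

lemma IsMonomialIdeal.mem_of_le {n : ℕ} {I : Set (Mon n)} (hI : IsMonomialIdeal I)
    {u w : Mon n} (hu : u ∈ I) (h : u ≤ w) : w ∈ I := by
  simpa [add_tsub_cancel_of_le h] using hI u hu (w - u)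

lemma component_subset {n : ℕ} {I : Set (Mon n)} (hI : IsMonomialIdeal I) (d : ℕ) :
    component I d ⊆ I :=
  fun _ ⟨_, hu, _, h⟩ => hI.mem_of_le hu h

lemma mem_minGens_component {n : ℕ} {I : Set (Mon n)} {w : Mon n} (hw : w ∈ I) :
    w ∈ minGens (component I (degree w)) := by
  refine ⟨⟨w, hw, rfl, le_rfl⟩, ?_⟩
  rintro v ⟨u, -, hu, huv⟩ hvw
  have huw : u = w := eq_of_le_of_not_lt (huv.trans hvw) fun h => (degree_lt_degree h).ne hu
  exact le_antisymm hvw (huw ▸ huv)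

lemma IsPolymatroidal.exch_mem_of_lt {J : Set (Mon 2)} (hJ : IsPolymatroidal J) {u v : Mon 2}
    (hu : u ∈ minGens J) (hv : v ∈ minGens J) {i j : Fin 2} (hij : i ≠ j) (hlt : v i < u i) :
    exch u i j ∈ J := by
  obtain ⟨k, hk, hmem⟩ := hJ.2 u hu v hv i hlt
  have hki : k ≠ i := by rintro rfl; omega
  have hkj : k = j := by omega
  exact hkj ▸ hmem

lemma ComponentwisePolymatroidal.exch_mem {I : Set (Mon 2)} (hI : IsMonomialIdeal I)
    (hcp : ComponentwisePolymatroidal I) {u v : Mon 2} (hu : u ∈ I) (hv : v ∈ I)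
    (hdeg : degree v ≤ degree u) {i j : Fin 2} (hij : i ≠ j) (hlt : v i < u i) :
    exch u i j ∈ I := by
  -- lift `v` to the degree of `u` by multiplying with a power of `x_j`, which keeps `v i`
  set v' := v + Pi.single j (degree u - degree v)
  have hv' : v' ∈ I := hI v hv _
  have hdeg' : degree v' = degree u := by
    simp only [v', degree_add, degree_single]
    omega
  have hlt' : v' i < u i := by simpa [v', Pi.single_apply, hij] using hlt
  have hv'gen : v' ∈ minGens (component I (degree u)) := hdeg' ▸ mem_minGens_component hv'
  exact component_subset hI _ <|
    (hcp _).exch_mem_of_lt (mem_minGens_component hu) hv'gen hij hlt'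

lemma exch_vec_two_zero_one (p q : ℕ) : exch ![p, q] 0 1 = ![p - 1, q + 1] := by
  ext k
  fin_cases k <;> simp [exch]

lemma exch_vec_two_one_zero (p q : ℕ) : exch ![p, q] 1 0 = ![p + 1, q - 1] := by
  ext k
  fin_cases k <;> simp [exch]

section Staircase

variable {I : Set (Mon 2)} {m : ℕ} {a b : ℕ → ℕ}

lemma vec_mem_of_minGens_eq (hgens : minGens I = {u | ∃ i ≤ m, u = ![a i, b i]}) {i : ℕ}
    (hi : i ≤ m) : ![a i, b i] ∈ I := by
  have h : ![a i, b i] ∈ minGens I := hgens ▸ ⟨i, hi, rfl⟩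
  exact h.1

lemma exists_le_of_vec_mem (hgens : minGens I = {u | ∃ i ≤ m, u = ![a i, b i]}) {p q : ℕ}
    (h : ![p, q] ∈ I) : ∃ k ≤ m, a k ≤ p ∧ b k ≤ q := by
  obtain ⟨g, hg, hle⟩ := exists_mem_minGens_le h
  rw [hgens] at hg
  obtain ⟨k, hk, rfl⟩ := hg
  exact ⟨k, hk, hle 0, hle 1⟩

variable (ha : StrictAntiOn a (Set.Iic m)) (hb : StrictMonoOn b (Set.Iic m))
  (hgens : minGens I = {u | ∃ i ≤ m, u = ![a i, b i]})
include ha hb hgens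

lemma le_of_vec_mem_of_lt_fst {i p q : ℕ} (hi : i + 1 ≤ m) (h : ![p, q] ∈ I) (hp : p < a i) :
    b (i + 1) ≤ q := by
  obtain ⟨k, hk, hak, hbk⟩ := exists_le_of_vec_mem hgens h
  have hik : i < k := (ha.lt_iff_gt hk (Nat.le_of_succ_le hi)).1 (by omega)
  exact (hb.monotoneOn hi hk hik).trans hbk

lemma le_of_vec_mem_of_lt_snd {i p q : ℕ} (hi : i + 1 ≤ m) (h : ![p, q] ∈ I)
    (hq : q < b (i + 1)) : a i ≤ p := by
  obtain ⟨k, hk, hak, hbk⟩ := exists_le_of_vec_mem hgens h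
  have hki : k < i + 1 := (hb.lt_iff_lt hk hi).1 (by omega)
  exact (ha.antitoneOn hk (Nat.le_of_succ_le hi) (by omega)).trans hak

variable (hI : IsMonomialIdeal I) (hcp : ComponentwisePolymatroidal I)
include hI hcp

lemma snd_succ_eq_of_degree_le {i : ℕ} (hi : i + 1 ≤ m)
    (hdeg : a (i + 1) + b (i + 1) ≤ a i + b i) : b (i + 1) = b i + 1 := by
  have hlt : a (i + 1) < a i := ha (Nat.le_of_succ_le hi) hi i.lt_add_one
  have hmem := hcp.exch_mem hI (vec_mem_of_minGens_eq hgens (Nat.le_of_succ_le hi))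
    (vec_mem_of_minGens_eq hgens hi) (by simpa [degree_vec_two] using hdeg)
    (i := 0) (j := 1) (by decide) (by simpa using hlt)
  rw [exch_vec_two_zero_one] at hmem
  have hle := le_of_vec_mem_of_lt_fst ha hb hgens hi hmem (by omega)
  have hb_lt : b i < b (i + 1) := hb (Nat.le_of_succ_le hi) hi i.lt_add_one
  omega

lemma fst_eq_succ_of_degree_le {i : ℕ} (hi : i + 1 ≤ m)
    (hdeg : a i + b i ≤ a (i + 1) + b (i + 1)) : a i = a (i + 1) + 1 := by
  have hlt : b i < b (i + 1) := hb (Nat.le_of_succ_le hi) hi i.lt_add_one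
  have hmem := hcp.exch_mem hI (vec_mem_of_minGens_eq hgens hi)
    (vec_mem_of_minGens_eq hgens (Nat.le_of_succ_le hi)) (by simpa [degree_vec_two] using hdeg)
    (i := 1) (j := 0) (by decide) (by simpa using hlt)
  rw [exch_vec_two_one_zero] at hmem
  have hle := le_of_vec_mem_of_lt_snd ha hb hgens hi hmem (by omega)
  have ha_lt : a (i + 1) < a i := ha (Nat.le_of_succ_le hi) hi i.lt_add_one
  omega

end Staircase

/-- for a componentwise polymatroidal ideal in `K[x,y]` with generators
`u_i = x^{a i} y^{b i}`: if `deg u_i > deg u_{i+1}` then `a i - 1 > a (i+1)` and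
`b (i+1) = b i + 1`; if `deg u_i < deg u_{i+1}` then `b i + 1 < b (i+1)` and
`a (i+1) = a i - 1`; if the degrees are equal then `b (i+1) = b i + 1` and
`a (i+1) = a i - 1`. -/
theorem stmt_6 (I : Set (Mon 2)) (hI : IsMonomialIdeal I)
    (hcp : ComponentwisePolymatroidal I)
    (m : ℕ) (a b : ℕ → ℕ)
    (horder : ∀ i k : ℕ, i ≤ m → k ≤ m → i < k → a k < a i ∧ b i < b k)
    (hgens : minGens I = {u | ∃ i ≤ m, u = ![a i, b i]}) :
    ∀ i : ℕ, i < m →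
      ((a (i+1) + b (i+1) < a i + b i → a (i+1) + 1 < a i ∧ b (i+1) = b i + 1) ∧
       (a i + b i < a (i+1) + b (i+1) → b i + 1 < b (i+1) ∧ a (i+1) + 1 = a i) ∧
       (a i + b i = a (i+1) + b (i+1) → b (i+1) = b i + 1 ∧ a (i+1) + 1 = a i)) := by
  have ha : StrictAntiOn a (Set.Iic m) := fun i hi k hk hik => (horder i k hi hk hik).1
  have hb : StrictMonoOn b (Set.Iic m) := fun i hi k hk hik => (horder i k hi hk hik).2
  intro i hi
  have hsnd := snd_succ_eq_of_degree_le ha hb hgens hI hcp hi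
  have hfst := fst_eq_succ_of_degree_le ha hb hgens hI hcp hi
  refine ⟨fun h => ?_, fun h => ?_, fun h => ?_⟩
  · have := hsnd h.le
    omega
  · have := hfst h.le
    omega
  · have := hsnd h.ge
    have := hfst h.le
    omega
end
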